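/- Every finitely generated subgroup of an inverse limit of free groups is locally free; in particular, any subgroup of an inverse limit lim←(F_1 ← F_2 ← ⋯) of free groups of finite rank is locally free. -/

import Mathlib

/-!
Let `K` be a finitely generated subgroup of the inverse limit. Its projections `Q k` to the `F k`
are finitely generated subgroups of free groups, hence free of finite rank (Nielsen–Schreier),
and each is a quotient of the next, so their ranks never decrease. A free group of rank `r` has
`2 ^ r` homomorphisms to `ℤ/2`, at most as many as `K` has, so the ranks are bounded and
stabilize. A surjection between free groups of the same finite rank is injective: both have
`|Q| ^ r` homomorphisms to any finite group `Q`, so every homomorphism from the source to a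
finite group factors through the surjection, and free groups are residually finite. Hence the
projections eventually lose nothing, and `K` is isomorphic to its projection `Q N`.

Residual finiteness of `FreeGroup α`: write `w = mk M` and let `X` be the finite set of the
elements `mk N` for the tails `N` of `M`. Let each generator `a` act on `X` by any permutation
extending the partial injection `x ↦ a * x`; then `w` moves `1` to `w`.
-/

open Function

universe u

instance MonoidHom.finite_of_fg {G M : Type*} [Group G] [Group.FG G] [Monoid M] [Finite M] :
    Finite (G →* M) := by
  obtain ⟨S, hS⟩ := Group.FG.out (G := G)
  exact Finite.of_injective (fun φ : G →* M => fun s : S => φ s)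
    fun φ ψ h => MonoidHom.eq_of_eqOn_dense hS fun s hs => congrFun h ⟨s, hs⟩

theorem MonoidHom.card_monoidHom_le_of_surjective {A B M : Type*} [Group A] [Group B] [Monoid M]
    [Finite (A →* M)] (f : A →* B) (hf : Surjective f) :
    Nat.card (B →* M) ≤ Nat.card (A →* M) :=
  Nat.card_le_card_of_injective _ fun _ _ h => (MonoidHom.cancel_right hf).1 h

namespace Group.ResiduallyFinite

theorem of_injective {G G' : Type*} [Group G] [Group G'] [ResiduallyFinite G'] (f : G →* G')
    (hf : Injective f) : ResiduallyFinite G := by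
  refine residuallyFinite_of_forall_exists_finite_monoidHom fun g hg => ?_
  obtain ⟨H, hH⟩ := exists_finiteIndexNormalSubgroup_notMem (f g) ((map_ne_one_iff f hf).2 hg)
  exact ⟨G' ⧸ H.toSubgroup, inferInstance, inferInstance, (QuotientGroup.mk' _).comp f,
    by simpa [QuotientGroup.eq_one_iff, FiniteIndexNormalSubgroup.mem_toSubgroup_iff] using hH⟩

theorem injective_of_surjective {A : Type u} {B : Type*} [Group A] [Group B] [ResiduallyFinite A]
    [Group.FG A] (f : A →* B) (hf : Surjective f)
    (hcard : ∀ (Q : Type u) [Group Q] [Finite Q], Nat.card (A →* Q) ≤ Nat.card (B →* Q)) :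
    Injective f := by
  refine (injective_iff_map_eq_one f).2 fun a ha => by_contra fun hne => ?_
  obtain ⟨H, haH⟩ := exists_finiteIndexNormalSubgroup_notMem a hne
  have hbij : Bijective fun ψ : B →* A ⧸ H.toSubgroup => ψ.comp f :=
    Injective.bijective_of_nat_card_le (fun _ _ h => (MonoidHom.cancel_right hf).1 h)
      (hcard _)
  obtain ⟨ψ, hψ⟩ := hbij.2 (QuotientGroup.mk' _)
  refine haH ((QuotientGroup.eq_one_iff a).1 ?_)
  rw [← QuotientGroup.mk'_apply, ← hψ, MonoidHom.comp_apply, ha, map_one]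

end Group.ResiduallyFinite

theorem exists_perm_eq_mul_of_mul_mem {G : Type*} [Group G] (X : Set G) [Finite X] (g : G) :
    ∃ σ : Equiv.Perm X, ∀ x : X, g * x ∈ X → (σ x : G) = g * x := by
  classical
  let e : {x : X // g * x ∈ X} ≃ {y : X // g⁻¹ * y ∈ X} :=
    { toFun := fun x => ⟨⟨g * x, x.2⟩, by simp⟩
      invFun := fun y => ⟨⟨g⁻¹ * y, y.2⟩, by simp⟩
      left_inv := fun x => by ext; simp
      right_inv := fun y => by ext; simp }
  exact ⟨e.extendSubtype, fun x hx => by rw [e.extendSubtype_apply_of_mem x hx]; rfl⟩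

namespace FreeGroup

variable {α : Type*}

theorem mk_cons (a : α) (b : Bool) (M : List (α × Bool)) :
    mk ((a, b) :: M) = cond b (of a) (of a)⁻¹ * mk M := by
  cases b <;> simp [of, inv_mk, invRev, mul_mk]

theorem lift_mk_apply_one {X : Set (FreeGroup α)} (σ : α → Equiv.Perm X)
    (hσ : ∀ a (x : X), of a * (x : FreeGroup α) ∈ X → (σ a x : FreeGroup α) = of a * x)
    (h1 : 1 ∈ X) (M : List (α × Bool)) (hM : ∀ N ∈ M.tails, mk N ∈ X) :
    (lift σ (mk M) ⟨1, h1⟩ : FreeGroup α) = mk M := by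
  induction M with
  | nil => rfl
  | cons p M ih =>
    obtain ⟨a, b⟩ := p
    set y := lift σ (mk M) ⟨1, h1⟩
    have hy : (y : FreeGroup α) = mk M := ih fun N hN => hM N (by simp [hN])
    have hpM : mk ((a, b) :: M) ∈ X := hM _ (by simp)
    rw [mk_cons, MonoidHom.map_mul, Equiv.Perm.mul_apply]
    cases b
    · rw [mk_cons, cond_false] at hpM
      have hmem : of a * ((of a)⁻¹ * mk M) ∈ X := by rw [mul_inv_cancel_left, ← hy]; exact y.2
      rw [cond_false, MonoidHom.map_inv, lift_apply_of,
        Equiv.Perm.inv_eq_iff_eq.mpr (Subtype.ext (a2 := σ a ⟨_, hpM⟩) ?_)]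
      rw [hσ a ⟨_, hpM⟩ hmem, hy, mul_inv_cancel_left]
    · rw [cond_true, lift_apply_of, hσ a y (by rwa [hy, ← cond_true (of a) (of a)⁻¹, ← mk_cons]),
        hy]

instance residuallyFinite : Group.ResiduallyFinite (FreeGroup α) := by
  classical
  refine Group.residuallyFinite_of_forall_exists_finite_monoidHom fun w hw => ?_
  obtain ⟨L, rfl⟩ : ∃ L, mk L = w := ⟨w.toWord, mk_toWord⟩
  set X : Set (FreeGroup α) := mk '' {N | N ∈ L.tails}
  have : Finite X := (List.finite_toSet L.tails).image mk
  have h1 : 1 ∈ X := ⟨[], by simp, rfl⟩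
  choose σ hσ using fun a => exists_perm_eq_mul_of_mul_mem X (of a)
  refine ⟨Equiv.Perm X, inferInstance, inferInstance, lift σ, fun h => hw ?_⟩
  have := lift_mk_apply_one σ hσ h1 L fun N hN => ⟨N, hN, rfl⟩
  rw [h] at this
  exact this.symm

end FreeGroup

namespace IsFreeGroup

variable {A B : Type u} [Group A] [Group B] [IsFreeGroup A] [IsFreeGroup B]

instance residuallyFinite : Group.ResiduallyFinite A :=
  .of_injective (toFreeGroup A).toMonoidHom (toFreeGroup A).injective

instance finite_generators [Group.FG A] : Finite (Generators A) := by
  have : Finite (Generators A → Multiplicative (ZMod 2)) := .of_equiv _ lift.symm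
  by_contra h
  rw [not_finite_iff_infinite] at h
  exact not_finite (Generators A → Multiplicative (ZMod 2))

theorem card_monoidHom {M : Type*} [Group M] [Finite (Generators A)] :
    Nat.card (A →* M) = Nat.card M ^ Nat.card (Generators A) := by
  rw [← Nat.card_fun]
  exact (Nat.card_congr lift).symm

theorem pow_card_generators_le_card_monoidHom {G M : Type*} [Group G] [Group.FG G] [Group M]
    [Finite M] (f : G →* A) (hf : Surjective f) :
    Nat.card M ^ Nat.card (Generators A) ≤ Nat.card (G →* M) := by
  have : Group.FG A := Group.fg_of_surjective hf
  rw [← card_monoidHom]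
  exact f.card_monoidHom_le_of_surjective hf

theorem card_generators_le_of_surjective [Group.FG A] (f : A →* B) (hf : Surjective f) :
    Nat.card (Generators B) ≤ Nat.card (Generators A) := by
  have := pow_card_generators_le_card_monoidHom (M := Multiplicative (ZMod 2)) f hf
  rw [card_monoidHom] at this
  simpa using (Nat.pow_le_pow_iff_right (by norm_num)).1 this

theorem injective_of_surjective [Group.FG A] (f : A →* B) (hf : Surjective f)
    (hcard : Nat.card (Generators A) ≤ Nat.card (Generators B)) : Injective f := by
  have : Group.FG B := Group.fg_of_surjective hf
  refine Group.ResiduallyFinite.injective_of_surjective f hf fun Q _ _ => ?_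
  rw [card_monoidHom, card_monoidHom]
  exact Nat.pow_le_pow_right Nat.card_pos hcard

end IsFreeGroup

theorem Monotone.exists_forall_ge_eq {d : ℕ → ℕ} (hd : Monotone d) (hb : BddAbove (Set.range d)) :
    ∃ N, ∀ k ≥ N, d k = d N := by
  obtain ⟨N, hN⟩ := Nat.sSup_mem (Set.range_nonempty d) hb
  exact ⟨N, fun k hk => le_antisymm (hN ▸ le_csSup hb ⟨k, rfl⟩) (hd hk)⟩

theorem Antitone.le_of_forall_ge_le_succ {α : Type*} [Preorder α] {s : ℕ → α} (hs : Antitone s)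
    {N : ℕ} (h : ∀ k ≥ N, s k ≤ s (k + 1)) (k : ℕ) : s N ≤ s k := by
  rcases le_total k N with hk | hk
  · exact hs hk
  · induction k, hk using Nat.le_induction with
    | base => exact le_rfl
    | succ k hk ih => exact ih.trans (h k hk)

theorem MonoidHom.exists_surjective_comp_rangeRestrict {A B C : Type*} [Group A] [Group B]
    [Group C] (f : A →* B) (g : B →* C) :
    ∃ t : f.range →* (g.comp f).range,
      Surjective t ∧ t.comp f.rangeRestrict = (g.comp f).rangeRestrict := by
  refine ⟨(g.comp f.range.subtype).codRestrict _ ?_, ?_, rfl⟩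
  · rintro ⟨_, x, rfl⟩
    exact ⟨x, rfl⟩
  · rintro ⟨_, x, rfl⟩
    exact ⟨f.rangeRestrict x, rfl⟩

theorem IsFreeGroup.of_separating_compatible_homs {K : Type u} [Group K] [Group.FG K]
    {F : ℕ → Type u} [∀ k, Group (F k)] [∀ k, IsFreeGroup (F k)] (T : ∀ k, F (k + 1) →* F k)
    (π : ∀ k, K →* F k) (hπ : ∀ k, (T k).comp (π (k + 1)) = π k)
    (hsep : ∀ x, (∀ k, π k x = 1) → x = 1) : IsFreeGroup K := by
  obtain ⟨t, ht_surj, ht_comp⟩ : ∃ t : ∀ k, (π (k + 1)).range →* (π k).range,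
      (∀ k, Surjective (t k)) ∧ ∀ k, (t k).comp (π (k + 1)).rangeRestrict = (π k).rangeRestrict := by
    choose t ht using fun k => hπ k ▸ (π (k + 1)).exists_surjective_comp_rangeRestrict (T k)
    exact ⟨t, fun k => (ht k).1, fun k => (ht k).2⟩
  set d : ℕ → ℕ := fun k => Nat.card (IsFreeGroup.Generators (π k).range)
  have hd : Monotone d := monotone_nat_of_le_succ fun k =>
    IsFreeGroup.card_generators_le_of_surjective (t k) (ht_surj k)
  have hb : BddAbove (Set.range d) := by
    refine ⟨Nat.card (K →* Multiplicative (ZMod 2)), ?_⟩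
    rintro _ ⟨k, rfl⟩
    have := IsFreeGroup.pow_card_generators_le_card_monoidHom (M := Multiplicative (ZMod 2))
      (π k).rangeRestrict (π k).rangeRestrict_surjective
    exact Nat.lt_two_pow_self.le.trans (by simpa using this)
  obtain ⟨N, hN⟩ := hd.exists_forall_ge_eq hb
  have hdown : ∀ k, (π (k + 1)).ker ≤ (π k).ker := fun k x hx => by
    rw [MonoidHom.mem_ker, ← hπ k, MonoidHom.comp_apply, hx, map_one]
  have hup : ∀ k ≥ N, (π k).ker ≤ (π (k + 1)).ker := fun k hk x hx => by
    have ht_inj := IsFreeGroup.injective_of_surjective (t k) (ht_surj k)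
      ((hN (k + 1) (by omega)).trans (hN k hk).symm).le
    rw [← MonoidHom.ker_rangeRestrict] at hx ⊢
    rw [MonoidHom.mem_ker, ← ht_inj.eq_iff, map_one, ← MonoidHom.comp_apply, ht_comp]
    exact hx
  have hker : ∀ k, (π N).ker ≤ (π k).ker :=
    (antitone_nat_of_succ_le (f := fun k => (π k).ker) hdown).le_of_forall_ge_le_succ hup
  have hinj : Injective (π N) := (injective_iff_map_eq_one _).2 fun x hx =>
    hsep x fun k => hker k hx
  exact IsFreeGroup.ofMulEquiv (MonoidHom.ofInjective hinj).symm

/-- Every finitely generated subgroup of an inverse limit of free groups is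
locally free; in particular, if all the free groups have finite rank, then
every subgroup of the inverse limit is locally free.  The inverse limit is
modelled as a subgroup `L` of the product consisting exactly of the
compatible sequences. -/
theorem stmt_18 (F : ℕ → Type*) [∀ k, Group (F k)]
    [∀ k, IsFreeGroup (F k)]
    (T : ∀ k, F (k + 1) →* F k)
    (L : Subgroup (∀ k, F k))
    (hL : ∀ x : ∀ k, F k, x ∈ L ↔ ∀ k, T k (x (k + 1)) = x k) :
    (∀ H : Subgroup (∀ k, F k), H ≤ L → H.FG →
      ∀ K : Subgroup H, K.FG → IsFreeGroup K) ∧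
    ((∀ k, (⊤ : Subgroup (F k)).FG) →
      ∀ H : Subgroup (∀ k, F k), H ≤ L →
        ∀ K : Subgroup H, K.FG → IsFreeGroup K) := by
  have main : ∀ H : Subgroup (∀ k, F k), H ≤ L → ∀ K : Subgroup H, K.FG → IsFreeGroup K := by
    intro H hH K hK
    have : Group.FG K := (Group.fg_iff_subgroup_fg K).2 hK
    refine IsFreeGroup.of_separating_compatible_homs T
      (fun k => (Pi.evalMonoidHom F k).comp (H.subtype.comp K.subtype)) (fun k => ?_)
      fun x hx => Subtype.ext (Subtype.ext (funext hx))
    ext x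
    exact (hL _).1 (hH (x : H).2) k
  exact ⟨fun H hH _ => main H hH, fun _ => main⟩
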